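/- arXiv:2605.07698 — 2 statements merged into one kernel-verified Lean document; each statement's English description precedes it below -/
import Mathlib

section
/- Under the non-degeneracy assumption that every prefix w of some string of L with positive p-mass and length less than T satisfies ∑_{y∈A(w)} p(y|w) > 0, one has μ_proj = μ⋆ (as probability distributions on V^T) if and only if for every prefix w with positive μ_proj-mass and length less than T, the function y ↦ Φ(y|w) is constant and strictly positive on the set {y ∈ A(w) : p(y|w) > 0}. In particular, whenever future validity is non-constant at some reachable prefix, no decoder whose sequence law is μ_proj samples from μ⋆. -/
/-!
Write `M(w)` for the `μ_proj`-mass and `G(w)` for the `L`-mass of a prefix `w`. Non-degeneracy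
makes the projected kernel a probability vector at every prefix that `μ_proj` reaches, so
`M(w·y) = M(w) · μ_proj(y|w)`. Hence `μ_proj = μ⋆`, i.e. `M = G / Z_C` on all prefixes, holds iff
`G(w·y) = G(w) · μ_proj(y|w)` at every reachable `w`. Since `μ_proj(y|w)` is proportional to
`p(w·y)` on `A(w)`, this says that `Φ(y|w) = G(w·y) / p(w·y)` is constant there.
-/

open Finset
open scoped Classical

noncomputable section

/-- `w ∈ V^t` is the length-`t` prefix of `x ∈ V^T`. -/
def PrefMatch {V : Type*} {T t : ℕ} (ht : t ≤ T) (w : Fin t → V) (x : Fin T → V) : Prop :=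
  ∀ i : Fin t, x (Fin.castLE ht i) = w i

/-- Mass of the prefix `w` under a law `p` on `V^T`: `Pr_{X∼p}[X_{1:t} = w]`. -/
def prefMass {V : Type*} [Fintype V] {T t : ℕ} (p : (Fin T → V) → ℝ) (ht : t ≤ T)
    (w : Fin t → V) : ℝ :=
  ∑ x : Fin T → V, if PrefMatch ht w x then p x else 0

/-- Conditional next-token probability `p(y | w)`. -/
def condP {V : Type*} [Fintype V] {T t : ℕ} (p : (Fin T → V) → ℝ) (ht : t + 1 ≤ T)
    (w : Fin t → V) (y : V) : ℝ :=
  prefMass p ht (Fin.snoc w y) / prefMass p (Nat.le_of_succ_le ht) w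

/-- Mass of strings of `L` extending prefix `w`: `Pr_{X∼p}[X ∈ L ∧ X_{1:t} = w]`. -/
def lMass {V : Type*} [Fintype V] {T t : ℕ} (p : (Fin T → V) → ℝ)
    (L : Finset (Fin T → V)) (ht : t ≤ T) (w : Fin t → V) : ℝ :=
  ∑ x ∈ L, if PrefMatch ht w x then p x else 0

/-- Future validity `Φ(y | w) = Pr_{X∼p}[X ∈ L | X_{1:t+1} = w·y]` when the
prefix `w·y` has positive `p`-mass, and `0` otherwise. -/
def Phi {V : Type*} [Fintype V] {T t : ℕ} (p : (Fin T → V) → ℝ)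
    (L : Finset (Fin T → V)) (ht : t + 1 ≤ T) (w : Fin t → V) (y : V) : ℝ :=
  if 0 < prefMass p ht (Fin.snoc w y)
  then lMass p L ht (Fin.snoc w y) / prefMass p ht (Fin.snoc w y)
  else 0

/-- The locally valid next-token set `A(w)`. -/
def validSet {V : Type*} [Fintype V] {T t : ℕ} (L : Finset (Fin T → V))
    (ht : t + 1 ≤ T) (w : Fin t → V) : Finset V :=
  Finset.univ.filter (fun y => ∃ x ∈ L, PrefMatch ht (Fin.snoc w y) x)

/-- The locally projected kernel `μ_proj(y | w)`, taken to be `0` whenever the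
conditioning prefix has zero `p`-mass or the token is locally invalid. -/
def projKernel {V : Type*} [Fintype V] {T t : ℕ} (p : (Fin T → V) → ℝ)
    (L : Finset (Fin T → V)) (ht : t + 1 ≤ T) (w : Fin t → V) (y : V) : ℝ :=
  if 0 < prefMass p (Nat.le_of_succ_le ht) w ∧ y ∈ validSet L ht w
  then condP p ht w y / ∑ y' ∈ validSet L ht w, condP p ht w y'
  else 0

/-- The length-`t` prefix of `x`. -/
def pre {V : Type*} {T : ℕ} (x : Fin T → V) (t : ℕ) (ht : t ≤ T) : Fin t → V :=
  fun i => x (Fin.castLE ht i)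

/-- The locally projected sequence law `μ_proj(x) = ∏_t μ_proj(x_{t+1} | x_{1:t})`. -/
def muProj {V : Type*} [Fintype V] {T : ℕ} (p : (Fin T → V) → ℝ)
    (L : Finset (Fin T → V)) (x : Fin T → V) : ℝ :=
  ∏ t : Fin T, projKernel p L t.isLt (pre x t.val (Nat.le_of_lt t.isLt)) (x t)

section PrefixMass

variable {V : Type*} {T : ℕ}

lemma prefMatch_snoc_iff {t : ℕ} (ht : t + 1 ≤ T) (w : Fin t → V) (y : V) (x : Fin T → V) :
    PrefMatch ht (Fin.snoc w y) x ↔ PrefMatch (Nat.le_of_succ_le ht) w x ∧ x ⟨t, ht⟩ = y := by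
  constructor
  · intro h
    refine ⟨fun i => ?_, ?_⟩
    · simpa using h (Fin.castSucc i)
    · exact (h (Fin.last t)).trans (Fin.snoc_last _ _)
  · rintro ⟨hw, hy⟩ i
    induction i using Fin.lastCases with
    | last => rw [Fin.snoc_last]; exact hy
    | cast j => simpa using hw j

lemma prefMatch_self_iff (h : T ≤ T) (w x : Fin T → V) : PrefMatch h w x ↔ x = w :=
  ⟨fun hm => funext hm, fun he _ => he ▸ rfl⟩

lemma prefMatch_of_length_zero (h : 0 ≤ T) (w : Fin 0 → V) (x : Fin T → V) :
    PrefMatch h w x :=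
  fun i => i.elim0

variable [Fintype V]

lemma prefMass_eq_sum_snoc (μ : (Fin T → V) → ℝ) {t : ℕ} (ht : t + 1 ≤ T) (w : Fin t → V) :
    prefMass μ (Nat.le_of_succ_le ht) w = ∑ y, prefMass μ ht (Fin.snoc w y) := by
  unfold prefMass
  rw [Finset.sum_comm]
  refine Finset.sum_congr rfl fun x _ => ?_
  by_cases h : PrefMatch (Nat.le_of_succ_le ht) w x <;> simp [prefMatch_snoc_iff, h]

lemma prefMass_self (μ : (Fin T → V) → ℝ) (h : T ≤ T) (x : Fin T → V) :
    prefMass μ h x = μ x := by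
  simp [prefMass, prefMatch_self_iff]

lemma prefMass_of_length_zero (μ : (Fin T → V) → ℝ) (h : 0 ≤ T) (w : Fin 0 → V) :
    prefMass μ h w = ∑ x, μ x := by
  simp [prefMass, prefMatch_of_length_zero]

lemma prefMass_div_const (μ : (Fin T → V) → ℝ) (c : ℝ) {t : ℕ} (ht : t ≤ T) (w : Fin t → V) :
    prefMass (fun x => μ x / c) ht w = prefMass μ ht w / c := by
  unfold prefMass
  rw [Finset.sum_div]
  exact Finset.sum_congr rfl fun x _ => by split_ifs <;> simp

lemma prefMass_nonneg {μ : (Fin T → V) → ℝ} (hμ : ∀ x, 0 ≤ μ x) {t : ℕ} (ht : t ≤ T)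
    (w : Fin t → V) : 0 ≤ prefMass μ ht w :=
  Finset.sum_nonneg fun x _ => by split_ifs <;> simp [hμ x]

lemma prefMass_mono {μ ν : (Fin T → V) → ℝ} (hμν : ∀ x, μ x ≤ ν x) {t : ℕ} (ht : t ≤ T)
    (w : Fin t → V) : prefMass μ ht w ≤ prefMass ν ht w :=
  Finset.sum_le_sum fun x _ => by split_ifs <;> simp [hμν x]

lemma prefMass_snoc_le {μ : (Fin T → V) → ℝ} (hμ : ∀ x, 0 ≤ μ x) {t : ℕ} (ht : t + 1 ≤ T)
    (w : Fin t → V) (y : V) :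
    prefMass μ ht (Fin.snoc w y) ≤ prefMass μ (Nat.le_of_succ_le ht) w := by
  rw [prefMass_eq_sum_snoc μ ht w]
  exact Finset.single_le_sum (fun z _ => prefMass_nonneg hμ ht (Fin.snoc w z)) (Finset.mem_univ y)

lemma lMass_eq_prefMass (p : (Fin T → V) → ℝ) (L : Finset (Fin T → V)) {t : ℕ} (ht : t ≤ T)
    (w : Fin t → V) : lMass p L ht w = prefMass (fun x => if x ∈ L then p x else 0) ht w := by
  unfold lMass prefMass
  rw [← Finset.sum_subset (Finset.subset_univ L)]
  · exact Finset.sum_congr rfl fun x hx => by simp [hx]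
  · intro x _ hx
    simp [hx]

lemma lMass_eq_sum_snoc (p : (Fin T → V) → ℝ) (L : Finset (Fin T → V)) {t : ℕ} (ht : t + 1 ≤ T)
    (w : Fin t → V) :
    lMass p L (Nat.le_of_succ_le ht) w = ∑ y, lMass p L ht (Fin.snoc w y) := by
  simp only [lMass_eq_prefMass, prefMass_eq_sum_snoc _ ht w]

lemma lMass_self (p : (Fin T → V) → ℝ) (L : Finset (Fin T → V)) (h : T ≤ T) (x : Fin T → V) :
    lMass p L h x = if x ∈ L then p x else 0 := by
  rw [lMass_eq_prefMass, prefMass_self]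

lemma lMass_of_length_zero (p : (Fin T → V) → ℝ) (L : Finset (Fin T → V)) (h : 0 ≤ T)
    (w : Fin 0 → V) : lMass p L h w = ∑ x ∈ L, p x := by
  simp [lMass, prefMatch_of_length_zero]

lemma lMass_nonneg {p : (Fin T → V) → ℝ} (hp0 : ∀ x, 0 ≤ p x) (L : Finset (Fin T → V))
    {t : ℕ} (ht : t ≤ T) (w : Fin t → V) : 0 ≤ lMass p L ht w := by
  rw [lMass_eq_prefMass]
  exact prefMass_nonneg (fun x => by split_ifs <;> simp [hp0 x]) ht w

lemma lMass_le_prefMass {p : (Fin T → V) → ℝ} (hp0 : ∀ x, 0 ≤ p x) (L : Finset (Fin T → V))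
    {t : ℕ} (ht : t ≤ T) (w : Fin t → V) : lMass p L ht w ≤ prefMass p ht w := by
  rw [lMass_eq_prefMass]
  exact prefMass_mono (fun x => by split_ifs <;> simp [hp0 x]) ht w

lemma lMass_snoc_le {p : (Fin T → V) → ℝ} (hp0 : ∀ x, 0 ≤ p x) (L : Finset (Fin T → V))
    {t : ℕ} (ht : t + 1 ≤ T) (w : Fin t → V) (y : V) :
    lMass p L ht (Fin.snoc w y) ≤ lMass p L (Nat.le_of_succ_le ht) w := by
  simp only [lMass_eq_prefMass]
  exact prefMass_snoc_le (fun x => by split_ifs <;> simp [hp0 x]) ht w y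

lemma lMass_snoc_eq_zero_of_not_mem (p : (Fin T → V) → ℝ) {L : Finset (Fin T → V)} {t : ℕ}
    {ht : t + 1 ≤ T} {w : Fin t → V} {y : V} (hy : y ∉ validSet L ht w) :
    lMass p L ht (Fin.snoc w y) = 0 := by
  simp only [validSet, Finset.mem_filter, Finset.mem_univ, true_and, not_exists, not_and] at hy
  exact Finset.sum_eq_zero fun x hx => if_neg (hy x hx)

end PrefixMass

def IsViable {V : Type*} [Fintype V] {T t : ℕ} (p : (Fin T → V) → ℝ)
    (L : Finset (Fin T → V)) (ht : t ≤ T) (w : Fin t → V) : Prop :=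
  0 < prefMass p ht w ∧ ∃ x ∈ L, PrefMatch ht w x

section ProjKernel

variable {V : Type*} [Fintype V] {T : ℕ} {p : (Fin T → V) → ℝ} {L : Finset (Fin T → V)}
  {t : ℕ}

lemma condP_nonneg (hp0 : ∀ x, 0 ≤ p x) (ht : t + 1 ≤ T) (w : Fin t → V) (y : V) :
    0 ≤ condP p ht w y :=
  div_nonneg (prefMass_nonneg hp0 ht _) (prefMass_nonneg hp0 _ w)

lemma projKernel_nonneg (hp0 : ∀ x, 0 ≤ p x) (ht : t + 1 ≤ T) (w : Fin t → V) (y : V) :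
    0 ≤ projKernel p L ht w y := by
  unfold projKernel
  split_ifs
  · exact div_nonneg (condP_nonneg hp0 ht w y)
      (Finset.sum_nonneg fun y' _ => condP_nonneg hp0 ht w y')
  · exact le_rfl

variable {ht : t + 1 ≤ T} {w : Fin t → V}

lemma projKernel_of_mem (hQ : 0 < prefMass p (Nat.le_of_succ_le ht) w) {y : V}
    (hy : y ∈ validSet L ht w) :
    projKernel p L ht w y = condP p ht w y / ∑ y' ∈ validSet L ht w, condP p ht w y' :=
  if_pos ⟨hQ, hy⟩

lemma projKernel_of_not_mem {y : V} (hy : y ∉ validSet L ht w) : projKernel p L ht w y = 0 :=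
  if_neg fun h => hy h.2

lemma sum_projKernel_eq_one (hQ : 0 < prefMass p (Nat.le_of_succ_le ht) w)
    (hS : 0 < ∑ y ∈ validSet L ht w, condP p ht w y) : ∑ y, projKernel p L ht w y = 1 := by
  unfold projKernel
  simp only [hQ, true_and]
  rw [Finset.sum_ite_mem, Finset.univ_inter, ← Finset.sum_div, div_self hS.ne']

lemma isViable_snoc_of_projKernel_ne_zero (hp0 : ∀ x, 0 ≤ p x) {y : V}
    (hK : projKernel p L ht w y ≠ 0) : IsViable p L ht (Fin.snoc w y) := by
  unfold projKernel at hK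
  split_ifs at hK with h
  · refine ⟨(prefMass_nonneg hp0 ht _).lt_of_ne' ?_, (Finset.mem_filter.mp h.2).2⟩
    exact left_ne_zero_of_mul (left_ne_zero_of_mul hK)
  · exact absurd rfl hK

end ProjKernel

/-- The product `∏_{s<t} μ_proj(w_{s+1} | w_{1:s})` of projected kernels along a prefix `w`. -/
def projKernelProd {V : Type*} [Fintype V] {T t : ℕ} (p : (Fin T → V) → ℝ)
    (L : Finset (Fin T → V)) (ht : t ≤ T) (w : Fin t → V) : ℝ :=
  ∏ s : Fin t, projKernel p L (Nat.lt_of_lt_of_le s.isLt ht)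
    (fun i : Fin s => w (Fin.castLE s.isLt.le i)) (w s)

def ProjNondegenerate {V : Type*} [Fintype V] {T : ℕ} (p : (Fin T → V) → ℝ)
    (L : Finset (Fin T → V)) : Prop :=
  ∀ (t : ℕ) (ht : t + 1 ≤ T) (w : Fin t → V),
    (∃ x ∈ L, PrefMatch (Nat.le_of_succ_le ht) w x) →
    0 < prefMass p (Nat.le_of_succ_le ht) w →
    0 < ∑ y ∈ validSet L ht w, condP p ht w y

section Marginal

variable {V : Type*} [Fintype V] {T : ℕ} {p : (Fin T → V) → ℝ} {L : Finset (Fin T → V)}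

lemma muProj_eq_projKernelProd (x : Fin T → V) : muProj p L x = projKernelProd p L le_rfl x :=
  rfl

lemma projKernelProd_of_length_zero (h : 0 ≤ T) (w : Fin 0 → V) : projKernelProd p L h w = 1 :=
  Fin.prod_univ_zero _

lemma projKernelProd_snoc {t : ℕ} (ht : t + 1 ≤ T) (w : Fin t → V) (y : V) :
    projKernelProd p L ht (Fin.snoc w y) =
      projKernelProd p L (Nat.le_of_succ_le ht) w * projKernel p L ht w y := by
  unfold projKernelProd
  rw [Fin.prod_univ_castSucc]
  congr 1
  · refine Finset.prod_congr rfl fun s _ => ?_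
    congr 1
    · funext i
      exact Fin.snoc_castSucc (i := Fin.castLE s.isLt.le i) ..
    · exact Fin.snoc_castSucc ..
  · congr 1
    · funext i
      exact Fin.snoc_castSucc ..
    · exact Fin.snoc_last ..

lemma projKernelProd_nonneg (hp0 : ∀ x, 0 ≤ p x) {t : ℕ} (ht : t ≤ T) (w : Fin t → V) :
    0 ≤ projKernelProd p L ht w :=
  Finset.prod_nonneg fun _ _ => projKernel_nonneg hp0 _ _ _

lemma isViable_of_projKernelProd_ne_zero (hp0 : ∀ x, 0 ≤ p x) (hZC : 0 < ∑ x ∈ L, p x)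
    {t : ℕ} (ht : t ≤ T) (w : Fin t → V) (h : projKernelProd p L ht w ≠ 0) :
    IsViable p L ht w := by
  cases t with
  | zero =>
    refine ⟨?_, ?_⟩
    · rw [prefMass_of_length_zero]
      exact hZC.trans_le (Finset.sum_le_sum_of_subset_of_nonneg (Finset.subset_univ L)
        fun x _ _ => hp0 x)
    · obtain ⟨x, hx⟩ := Finset.nonempty_of_sum_ne_zero hZC.ne'
      exact ⟨x, hx, prefMatch_of_length_zero ht w x⟩
  | succ s =>
    rw [← Fin.snoc_init_self w] at h ⊢
    rw [projKernelProd_snoc] at h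
    exact isViable_snoc_of_projKernel_ne_zero hp0 (right_ne_zero_of_mul h)

/-- By downward induction on the length: the kernels sum to one at every prefix with nonzero
kernel product, since such a prefix is viable. -/
lemma prefMass_muProj (hp0 : ∀ x, 0 ≤ p x) (hZC : 0 < ∑ x ∈ L, p x)
    (hnd : ProjNondegenerate p L) {t : ℕ} (ht : t ≤ T) (w : Fin t → V) :
    prefMass (muProj p L) ht w = projKernelProd p L ht w := by
  induction ht using Nat.decreasingInduction with
  | self => rw [prefMass_self, muProj_eq_projKernelProd]
  | of_succ t ht ih =>
    rw [prefMass_eq_sum_snoc _ ht w]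
    simp only [ih, projKernelProd_snoc, ← Finset.mul_sum]
    by_cases h0 : projKernelProd p L (Nat.le_of_succ_le ht) w = 0
    · rw [h0, zero_mul]
    · obtain ⟨hQ, hL⟩ := isViable_of_projKernelProd_ne_zero hp0 hZC _ w h0
      rw [sum_projKernel_eq_one hQ (hnd t ht w hL hQ), mul_one]

lemma prefMass_muProj_nonneg (hp0 : ∀ x, 0 ≤ p x) {t : ℕ} (ht : t ≤ T) (w : Fin t → V) :
    0 ≤ prefMass (muProj p L) ht w :=
  prefMass_nonneg (fun x => (muProj_eq_projKernelProd x).symm ▸ projKernelProd_nonneg hp0 le_rfl x)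
    ht w

lemma prefMass_muProj_snoc (hp0 : ∀ x, 0 ≤ p x) (hZC : 0 < ∑ x ∈ L, p x)
    (hnd : ProjNondegenerate p L) {t : ℕ} (ht : t + 1 ≤ T) (w : Fin t → V) (y : V) :
    prefMass (muProj p L) ht (Fin.snoc w y) =
      prefMass (muProj p L) (Nat.le_of_succ_le ht) w * projKernel p L ht w y := by
  rw [prefMass_muProj hp0 hZC hnd, prefMass_muProj hp0 hZC hnd, projKernelProd_snoc]

lemma isViable_of_prefMass_muProj_pos (hp0 : ∀ x, 0 ≤ p x) (hZC : 0 < ∑ x ∈ L, p x)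
    (hnd : ProjNondegenerate p L) {t : ℕ} {ht : t ≤ T} {w : Fin t → V}
    (h : 0 < prefMass (muProj p L) ht w) : IsViable p L ht w := by
  rw [prefMass_muProj hp0 hZC hnd] at h
  exact isViable_of_projKernelProd_ne_zero hp0 hZC ht w h.ne'

end Marginal

section Balance

variable {V : Type*} [Fintype V] {T : ℕ} {p : (Fin T → V) → ℝ} {L : Finset (Fin T → V)}
  {t : ℕ} {ht : t + 1 ≤ T} {w : Fin t → V}

lemma sum_prefMass_snoc_eq_mul (hQ : 0 < prefMass p (Nat.le_of_succ_le ht) w) (s : Finset V) :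
    ∑ y ∈ s, prefMass p ht (Fin.snoc w y) =
      prefMass p (Nat.le_of_succ_le ht) w * ∑ y ∈ s, condP p ht w y := by
  rw [Finset.mul_sum]
  exact Finset.sum_congr rfl fun y _ => by rw [condP, mul_div_cancel₀ _ hQ.ne']

lemma lMass_snoc_eq_mul_projKernel (hp0 : ∀ x, 0 ≤ p x)
    (hQ : 0 < prefMass p (Nat.le_of_succ_le ht) w)
    (hS : 0 < ∑ y ∈ validSet L ht w, condP p ht w y) {c : ℝ}
    (hc : ∀ y ∈ validSet L ht w, 0 < condP p ht w y → Phi p L ht w y = c) (y : V) :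
    lMass p L ht (Fin.snoc w y) = lMass p L (Nat.le_of_succ_le ht) w * projKernel p L ht w y := by
  have hsnoc : ∀ y, lMass p L ht (Fin.snoc w y) =
      if y ∈ validSet L ht w then c * prefMass p ht (Fin.snoc w y) else 0 := by
    intro y
    split_ifs with hy
    · rcases (prefMass_nonneg hp0 ht (Fin.snoc w y)).eq_or_lt with h0 | hpos
      · rw [← h0, mul_zero]
        exact le_antisymm (h0 ▸ lMass_le_prefMass hp0 L ht _) (lMass_nonneg hp0 L ht _)
      · have hPhi := hc y hy (div_pos hpos hQ)
        rw [Phi, if_pos hpos, div_eq_iff hpos.ne'] at hPhi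
        exact hPhi
    · exact lMass_snoc_eq_zero_of_not_mem p hy
  have hw : lMass p L (Nat.le_of_succ_le ht) w =
      c * (prefMass p (Nat.le_of_succ_le ht) w * ∑ y ∈ validSet L ht w, condP p ht w y) := by
    rw [lMass_eq_sum_snoc p L ht w, Finset.sum_congr rfl fun y _ => hsnoc y, Finset.sum_ite_mem,
      Finset.univ_inter, ← Finset.mul_sum, sum_prefMass_snoc_eq_mul hQ]
  rw [hsnoc y]
  split_ifs with hy
  · rw [projKernel_of_mem hQ hy, hw, condP]
    field_simp
  · rw [projKernel_of_not_mem hy, mul_zero]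

lemma phi_eq_of_lMass_snoc_eq (hQ : 0 < prefMass p (Nat.le_of_succ_le ht) w) {y : V}
    (hy : y ∈ validSet L ht w) (hcond : 0 < condP p ht w y)
    (hbal : lMass p L ht (Fin.snoc w y) =
      lMass p L (Nat.le_of_succ_le ht) w * projKernel p L ht w y) :
    Phi p L ht w y = lMass p L (Nat.le_of_succ_le ht) w /
      (prefMass p (Nat.le_of_succ_le ht) w * ∑ y' ∈ validSet L ht w, condP p ht w y') := by
  have hQy : 0 < prefMass p ht (Fin.snoc w y) := by
    rw [condP] at hcond
    simpa [hQ.ne'] using mul_pos hcond hQ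
  rw [Phi, if_pos hQy, hbal, projKernel_of_mem hQ hy, condP]
  field_simp

end Balance

lemma prefMass_muProj_eq_lMass_div {V : Type*} [Fintype V] {T : ℕ} {p : (Fin T → V) → ℝ}
    {L : Finset (Fin T → V)} (hp0 : ∀ x, 0 ≤ p x) (hZC : 0 < ∑ x ∈ L, p x)
    (hnd : ProjNondegenerate p L)
    (hconst : ∀ (t : ℕ) (ht : t + 1 ≤ T) (w : Fin t → V),
      0 < prefMass (muProj p L) (Nat.le_of_succ_le ht) w →
      ∃ c : ℝ, ∀ y ∈ validSet L ht w, 0 < condP p ht w y → Phi p L ht w y = c) :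
    ∀ (t : ℕ) (ht : t ≤ T) (w : Fin t → V),
      prefMass (muProj p L) ht w = lMass p L ht w / ∑ x ∈ L, p x := by
  intro t
  induction t with
  | zero =>
    intro ht w
    rw [prefMass_muProj hp0 hZC hnd, projKernelProd_of_length_zero, lMass_of_length_zero,
      div_self hZC.ne']
  | succ t ih =>
    intro ht w
    rw [← Fin.snoc_init_self w, prefMass_muProj_snoc hp0 hZC hnd]
    set u := Fin.init w
    rcases (prefMass_muProj_nonneg hp0 (Nat.le_of_succ_le ht) u).eq_or_lt with h0 | hpos
    · have hu : lMass p L (Nat.le_of_succ_le ht) u = 0 := by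
        rw [ih, eq_comm, div_eq_zero_iff] at h0
        exact h0.resolve_right hZC.ne'
      have huy : lMass p L ht (Fin.snoc u (w (Fin.last t))) = 0 :=
        le_antisymm (hu ▸ lMass_snoc_le hp0 L ht u _) (lMass_nonneg hp0 L ht _)
      rw [← h0, huy, zero_mul, zero_div]
    · obtain ⟨c, hc⟩ := hconst t ht u hpos
      obtain ⟨hQ, hL⟩ := isViable_of_prefMass_muProj_pos hp0 hZC hnd hpos
      rw [lMass_snoc_eq_mul_projKernel hp0 hQ (hnd t ht u hL hQ) hc, ih]
      ring

theorem stmt5_general {V : Type*} [Fintype V] {T : ℕ}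
    (p : (Fin T → V) → ℝ) (hp0 : ∀ x, 0 ≤ p x)
    (L : Finset (Fin T → V)) (hZC : 0 < ∑ x ∈ L, p x)
    (μstar : (Fin T → V) → ℝ)
    (hμstar : ∀ x, μstar x = (if x ∈ L then p x else 0) / ∑ z ∈ L, p z)
    (hnd : ∀ (t : ℕ) (ht : t + 1 ≤ T) (w : Fin t → V),
      (∃ x ∈ L, PrefMatch (Nat.le_of_succ_le ht) w x) →
      0 < prefMass p (Nat.le_of_succ_le ht) w →
      0 < ∑ y ∈ validSet L ht w, condP p ht w y) :
    muProj p L = μstar ↔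
      ∀ (t : ℕ) (ht : t + 1 ≤ T) (w : Fin t → V),
        0 < prefMass (muProj p L) (Nat.le_of_succ_le ht) w →
        ∃ c : ℝ, 0 < c ∧
          ∀ y ∈ validSet L ht w, 0 < condP p ht w y → Phi p L ht w y = c := by
  have hμstar_pref : ∀ (t : ℕ) (ht : t ≤ T) (w : Fin t → V),
      prefMass μstar ht w = lMass p L ht w / ∑ z ∈ L, p z := by
    intro t ht w
    rw [funext hμstar, prefMass_div_const, lMass_eq_prefMass]
  constructor
  · intro heq t ht w hw
    obtain ⟨hQ, hL⟩ := isViable_of_prefMass_muProj_pos hp0 hZC hnd hw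
    have hS := hnd t ht w hL hQ
    rw [heq, hμstar_pref] at hw
    refine ⟨_, div_pos ((div_pos_iff_of_pos_right hZC).mp hw) (mul_pos hQ hS),
      fun y hy hcond => phi_eq_of_lMass_snoc_eq hQ hy hcond ?_⟩
    have hchain := prefMass_muProj_snoc hp0 hZC hnd ht w y
    rw [heq, hμstar_pref, hμstar_pref, div_mul_eq_mul_div, div_left_inj' hZC.ne'] at hchain
    exact hchain
  · intro hconst
    funext x
    have h := prefMass_muProj_eq_lMass_div hp0 hZC hnd
      (fun t ht w hw => (hconst t ht w hw).imp fun _ hc => hc.2) T le_rfl x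
    rwa [prefMass_self, lMass_self, ← hμstar] at h

/-- under the non-degeneracy assumption, `μ_proj = μ⋆` (as
distributions on `V^T`) if and only if at every prefix `w` of length `< T`
with positive `μ_proj`-mass, the future validity `y ↦ Φ(y|w)` is constant and
strictly positive on `{y ∈ A(w) : p(y|w) > 0}`. -/
theorem stmt5 {V : Type*} [Fintype V] [Nonempty V] {T : ℕ} (hT : 1 ≤ T)
    (p : (Fin T → V) → ℝ) (hp0 : ∀ x, 0 ≤ p x) (hp1 : ∑ x, p x = 1)
    (L : Finset (Fin T → V)) (hZC : 0 < ∑ x ∈ L, p x)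
    (μstar : (Fin T → V) → ℝ)
    (hμstar : ∀ x, μstar x = (if x ∈ L then p x else 0) / ∑ z ∈ L, p z)
    (hnd : ∀ (t : ℕ) (ht : t + 1 ≤ T) (w : Fin t → V),
      (∃ x ∈ L, PrefMatch (Nat.le_of_succ_le ht) w x) →
      0 < prefMass p (Nat.le_of_succ_le ht) w →
      0 < ∑ y ∈ validSet L ht w, condP p ht w y) :
    muProj p L = μstar ↔
      ∀ (t : ℕ) (ht : t + 1 ≤ T) (w : Fin t → V),
        0 < prefMass (muProj p L) (Nat.le_of_succ_le ht) w →
        ∃ c : ℝ, 0 < c ∧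
          ∀ y ∈ validSet L ht w, 0 < condP p ht w y → Phi p L ht w y = c :=
  stmt5_general p hp0 L hZC μstar hμstar hnd

end
end

section
/- If there exists δ ≥ 0 with |Φ̂(y) − Φ(y)| ≤ δ for all y ∈ A and Ẑ > 0, then ∑_{y∈A} |μ̂(y) − μ⋆(y)| ≤ 2·δ·Z_p/Ẑ; equivalently, TV(μ̂, μ⋆) ≤ δ·Z_p/Ẑ. -/
/-!
Normalising is 2-Lipschitz in `ℓ¹`, relative to the new mass: `w/W − v/V` splits as `(w − v)/W`
plus `v·(1/W − 1/V)`, and for `v ≥ 0` the second part has `ℓ¹` mass `|V − W|/W ≤ ‖w − v‖₁/W`.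
With `w = p·Φ̂` and `v = p·Φ` one has `‖w − v‖₁ ≤ δ·Z_p`.
-/

open Finset

lemma mul_abs_inv_sub_inv_le {V W : ℝ} (hV : 0 ≤ V) (hW : 0 < W) :
    V * |W⁻¹ - V⁻¹| ≤ |V - W| / W := by
  rcases hV.eq_or_lt with rfl | hV
  · simp only [zero_mul]; positivity
  · rw [← abs_of_nonneg hV.le, ← abs_mul, abs_of_nonneg hV.le, mul_sub,
      mul_inv_cancel₀ hV.ne', ← div_eq_mul_inv, div_sub_one hW.ne', abs_div, abs_of_pos hW]

theorem sum_abs_div_sum_sub_div_sum_le {ι : Type*} (s : Finset ι) (w v : ι → ℝ)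
    (hv : ∀ i ∈ s, 0 ≤ v i) (hW : 0 < ∑ i ∈ s, w i) :
    ∑ i ∈ s, |w i / ∑ j ∈ s, w j - v i / ∑ j ∈ s, v j|
      ≤ 2 * (∑ i ∈ s, |w i - v i|) / ∑ i ∈ s, w i := by
  set W := ∑ j ∈ s, w j
  set V := ∑ j ∈ s, v j
  set D := ∑ i ∈ s, |w i - v i|
  have hV : 0 ≤ V := sum_nonneg hv
  have hVW : |V - W| ≤ D := by
    rw [abs_sub_comm, ← sum_sub_distrib]
    exact abs_sum_le_sum_abs _ _
  have pointwise : ∀ i ∈ s, |w i / W - v i / V| ≤ |w i - v i| / W + v i * |W⁻¹ - V⁻¹| := by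
    intro i hi
    have split : w i / W - v i / V = (w i - v i) / W + v i * (W⁻¹ - V⁻¹) := by ring
    rw [split]
    refine (abs_add_le _ _).trans_eq ?_
    rw [abs_div, abs_of_pos hW, abs_mul, abs_of_nonneg (hv i hi)]
  calc ∑ i ∈ s, |w i / W - v i / V|
      ≤ ∑ i ∈ s, (|w i - v i| / W + v i * |W⁻¹ - V⁻¹|) := sum_le_sum pointwise
    _ = D / W + V * |W⁻¹ - V⁻¹| := by rw [sum_add_distrib, ← sum_div, ← sum_mul]
    _ ≤ D / W + |V - W| / W := by gcongr; exact mul_abs_inv_sub_inv_le hV hW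
    _ ≤ D / W + D / W := by gcongr
    _ = 2 * D / W := by ring

theorem stmt10_general {A : Type*} [Fintype A]
    (p Φ Φhat : A → ℝ) (Zp Zs Zhat δ : ℝ)
    (hp : ∀ y, 0 ≤ p y) (hZp : Zp = ∑ y, p y)
    (hΦ : ∀ y, 0 ≤ Φ y ∧ Φ y ≤ 1) (hZs : Zs = ∑ y, p y * Φ y)
    (hZhat : Zhat = ∑ y, p y * Φhat y)
    (herr : ∀ y, |Φhat y - Φ y| ≤ δ) (hZhatpos : 0 < Zhat) :
    (∑ y, |p y * Φhat y / Zhat - p y * Φ y / Zs| ≤ 2 * δ * Zp / Zhat) ∧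
    (1/2) * ∑ y, |p y * Φhat y / Zhat - p y * Φ y / Zs| ≤ δ * Zp / Zhat := by
  have weighted_err : ∑ y, |p y * Φhat y - p y * Φ y| ≤ δ * Zp := by
    rw [hZp, mul_sum]
    refine sum_le_sum fun y _ ↦ ?_
    rw [← mul_sub, abs_mul, abs_of_nonneg (hp y), mul_comm δ]
    exact mul_le_mul_of_nonneg_left (herr y) (hp y)
  have l1_bound : ∑ y, |p y * Φhat y / Zhat - p y * Φ y / Zs| ≤ 2 * δ * Zp / Zhat := by
    subst hZs hZhat
    calc _ ≤ 2 * (∑ y, |p y * Φhat y - p y * Φ y|) / ∑ y, p y * Φhat y :=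
          sum_abs_div_sum_sub_div_sum_le _ _ _
            (fun y _ ↦ mul_nonneg (hp y) (hΦ y).1) hZhatpos
      _ ≤ 2 * δ * Zp / ∑ y, p y * Φhat y := by rw [mul_assoc]; gcongr
  refine ⟨l1_bound, ?_⟩
  have halve : 1/2 * (2 * δ * Zp / Zhat) = δ * Zp / Zhat := by ring
  linarith

/-- if `|Φ̂ y − Φ y| ≤ δ` for all `y ∈ A` and `Ẑ > 0`, then
`∑_y |μ̂ y − μ⋆ y| ≤ 2·δ·Z_p/Ẑ`; equivalently `TV(μ̂, μ⋆) ≤ δ·Z_p/Ẑ`. -/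
theorem stmt10 {A : Type*} [Fintype A] [Nonempty A]
    (p Φ Φhat : A → ℝ) (Zp Zs Zhat δ : ℝ)
    (hp : ∀ y, 0 ≤ p y) (hZp : Zp = ∑ y, p y) (hZppos : 0 < Zp)
    (hΦ : ∀ y, 0 ≤ Φ y ∧ Φ y ≤ 1) (hZs : Zs = ∑ y, p y * Φ y) (hZspos : 0 < Zs)
    (hΦhat0 : ∀ y, 0 ≤ Φhat y) (hZhat : Zhat = ∑ y, p y * Φhat y)
    (hδ0 : 0 ≤ δ) (herr : ∀ y, |Φhat y - Φ y| ≤ δ) (hZhatpos : 0 < Zhat) :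
    (∑ y, |p y * Φhat y / Zhat - p y * Φ y / Zs| ≤ 2 * δ * Zp / Zhat) ∧
    (1/2) * ∑ y, |p y * Φhat y / Zhat - p y * Φ y / Zs| ≤ δ * Zp / Zhat :=
  stmt10_general p Φ Φhat Zp Zs Zhat δ hp hZp hΦ hZs hZhat herr hZhatpos
end
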